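/- Let G be a finitely generated group with inverse-closed generating alphabet Σ = X ∪ X⁻¹. If the word problem WP(G, X) is a visibly pushdown language over some partition of Σ, then every generator x ∈ X has finite order in G. -/

import Mathlib

inductive VKind | call | internal | response
deriving DecidableEq

/-- A (nondeterministic) visibly pushdown automaton over alphabet `A`
partitioned by `kind` into call, internal and response letters. -/
structure VPA (A : Type) (kind : A → VKind) where
  Q : Type
  Γ : Type
  [finQ : Fintype Q]
  [finΓ : Fintype Γ]
  init : Q
  accept : Set Q
  /-- transitions on call letters: push one symbol, do not inspect the stack -/
  δc : Q → A → Set (Q × Γ)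
  /-- transitions on internal letters: do not inspect or modify the stack -/
  δi : Q → A → Set Q
  /-- transitions on response letters: pop the topmost stack symbol -/
  δr : Q → A → Γ → Set Q
  /-- transitions on response letters read on the empty stack (bottom symbol) -/
  δb : Q → A → Set Q

namespace VPA

variable {A : Type} {kind : A → VKind}

inductive Steps (M : VPA A kind) : M.Q × List M.Γ → List A → M.Q × List M.Γ → Prop
  | nil (c) : Steps M c [] c
  | call {q s a q' γ w c} : kind a = .call → (q', γ) ∈ M.δc q a →
      Steps M (q', γ :: s) w c → Steps M (q, s) (a :: w) c
  | internal {q s a q' w c} : kind a = .internal → q' ∈ M.δi q a →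
      Steps M (q', s) w c → Steps M (q, s) (a :: w) c
  | pop {q γ s a q' w c} : kind a = .response → q' ∈ M.δr q a γ →
      Steps M (q', s) w c → Steps M (q, γ :: s) (a :: w) c
  | popEmpty {q a q' w c} : kind a = .response → q' ∈ M.δb q a →
      Steps M (q', []) w c → Steps M (q, []) (a :: w) c

/-- A VPA accepts a word if reading it from the initial state with empty stack
can end in an accepting state (with arbitrary stack contents). -/
def Accepts (M : VPA A kind) (w : List A) : Prop :=
  ∃ c : M.Q × List M.Γ, M.Steps (M.init, []) w c ∧ c.1 ∈ M.accept

end VPA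

/-- `L` is a visibly pushdown language over the partition `kind`. -/
def IsVPL {A : Type} (kind : A → VKind) (L : Set (List A)) : Prop :=
  ∃ M : VPA A kind, L = {w | M.Accepts w}

/-!
Let `x` be a letter with `σ x` of infinite order and `y` a letter with `σ y = (σ x)⁻¹`, so that
`xⁿ yᵐ` lies in the word problem exactly when `n = m`. Swapping `x` and `y` if necessary, either
`x` is not a call letter, and then reading `xⁿ` from the empty stack leaves the stack empty, or `y`
is a call letter, and then reading `yⁿ` never inspects the stack. Either way, the only information
carried from `xⁿ` into `yⁿ` is a state; by pigeonhole two exponents `n ≠ m` lead to the same state,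
so an automaton accepting every `xⁿ yⁿ` also accepts `xᵐ yⁿ`.
-/

namespace VPA

variable {A : Type} {kind : A → VKind} (M : VPA A kind)

theorem steps_append_iff {c c'' : M.Q × List M.Γ} {u v : List A} :
    M.Steps c (u ++ v) c'' ↔ ∃ c', M.Steps c u c' ∧ M.Steps c' v c'' := by
  constructor
  · intro h
    induction u generalizing c with
    | nil => exact ⟨c, .nil c, h⟩
    | cons x u ih =>
      cases h with
      | call hk ht hs => obtain ⟨c', h1, h2⟩ := ih hs; exact ⟨c', .call hk ht h1, h2⟩
      | internal hk ht hs => obtain ⟨c', h1, h2⟩ := ih hs; exact ⟨c', .internal hk ht h1, h2⟩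
      | pop hk ht hs => obtain ⟨c', h1, h2⟩ := ih hs; exact ⟨c', .pop hk ht h1, h2⟩
      | popEmpty hk ht hs => obtain ⟨c', h1, h2⟩ := ih hs; exact ⟨c', .popEmpty hk ht h1, h2⟩
  · rintro ⟨c', h1, h2⟩
    induction h1 with
    | nil => exact h2
    | call hk ht _ ih => exact .call hk ht (ih h2)
    | internal hk ht _ ih => exact .internal hk ht (ih h2)
    | pop hk ht _ ih => exact .pop hk ht (ih h2)
    | popEmpty hk ht _ ih => exact .popEmpty hk ht (ih h2)

theorem stack_eq_nil_of_steps_of_forall_ne_call {w : List A} (hw : ∀ x ∈ w, kind x ≠ .call)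
    {q : M.Q} {c : M.Q × List M.Γ} (h : M.Steps (q, []) w c) : c.2 = [] := by
  induction w generalizing q with
  | nil => cases h; rfl
  | cons a w ih =>
    have hw' : ∀ x ∈ w, kind x ≠ .call := fun x hx => hw x (.tail a hx)
    cases h with
    | call hk => exact absurd hk (hw a List.mem_cons_self)
    | internal _ _ hs => exact ih hw' hs
    | popEmpty _ _ hs => exact ih hw' hs

theorem exists_steps_of_forall_call {w : List A} (hw : ∀ x ∈ w, kind x = .call)
    {q : M.Q} {s : List M.Γ} {c : M.Q × List M.Γ} (h : M.Steps (q, s) w c) (s' : List M.Γ) :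
    ∃ s'', M.Steps (q, s') w (c.1, s'') := by
  induction w generalizing q s s' with
  | nil => cases h; exact ⟨s', .nil _⟩
  | cons a w ih =>
    have hw' : ∀ x ∈ w, kind x = .call := fun x hx => hw x (.tail a hx)
    cases h with
    | call hk ht hs =>
      obtain ⟨s'', h'⟩ := ih hw' hs _
      exact ⟨s'', .call hk ht h'⟩
    | internal hk => cases hk.symm.trans (hw a List.mem_cons_self)
    | pop hk => cases hk.symm.trans (hw a List.mem_cons_self)
    | popEmpty hk => cases hk.symm.trans (hw a List.mem_cons_self)

variable {u v : ℕ → List A}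

theorem exists_ne_accepts_append_of_forall_ne_call (hu : ∀ n, ∀ x ∈ u n, kind x ≠ .call)
    (hacc : ∀ n, M.Accepts (u n ++ v n)) : ∃ n m, n ≠ m ∧ M.Accepts (u m ++ v n) := by
  have := M.finQ
  obtain ⟨n, m, hnm, hnm_eq⟩ := Finite.exists_ne_map_eq_of_infinite
    fun n => {q : M.Q | M.Steps (M.init, []) (u n) (q, [])}
  obtain ⟨c, hs, hc⟩ := hacc n
  obtain ⟨⟨q, st⟩, hu_steps, hv_steps⟩ := M.steps_append_iff.1 hs
  obtain rfl : st = [] := M.stack_eq_nil_of_steps_of_forall_ne_call (hu n) hu_steps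
  have hq : q ∈ {q : M.Q | M.Steps (M.init, []) (u m) (q, [])} := hnm_eq ▸ hu_steps
  exact ⟨n, m, hnm, c, M.steps_append_iff.2 ⟨_, hq, hv_steps⟩, hc⟩

theorem exists_ne_accepts_append_of_forall_call (hv : ∀ n, ∀ x ∈ v n, kind x = .call)
    (hacc : ∀ n, M.Accepts (u n ++ v n)) : ∃ n m, n ≠ m ∧ M.Accepts (u m ++ v n) := by
  have := M.finQ
  obtain ⟨n, m, hnm, hnm_eq⟩ := Finite.exists_ne_map_eq_of_infinite
    fun n => {q : M.Q | ∃ st, M.Steps (M.init, []) (u n) (q, st)}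
  obtain ⟨c, hs, hc⟩ := hacc n
  obtain ⟨⟨q, st⟩, hu_steps, hv_steps⟩ := M.steps_append_iff.1 hs
  have hq : q ∈ {q : M.Q | ∃ st, M.Steps (M.init, []) (u m) (q, st)} := hnm_eq ▸ ⟨st, hu_steps⟩
  obtain ⟨st', hu_steps'⟩ := hq
  obtain ⟨st'', hv_steps'⟩ := M.exists_steps_of_forall_call (hv n) hv_steps st'
  exact ⟨n, m, hnm, (c.1, st''), M.steps_append_iff.2 ⟨_, hu_steps', hv_steps'⟩, hc⟩

theorem exists_ne_accepts_replicate_append {a b : A} (hab : kind a ≠ .call ∨ kind b = .call)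
    (hacc : ∀ n, M.Accepts (List.replicate n a ++ List.replicate n b)) :
    ∃ n m, n ≠ m ∧ M.Accepts (List.replicate m a ++ List.replicate n b) := by
  rcases hab with ha | hb
  · exact M.exists_ne_accepts_append_of_forall_ne_call
      (fun _ _ hx => List.eq_of_mem_replicate hx ▸ ha) hacc
  · exact M.exists_ne_accepts_append_of_forall_call
      (fun _ _ hx => List.eq_of_mem_replicate hx ▸ hb) hacc

end VPA

theorem isOfFinOrder_of_isVPL_wordProblem {G : Type} [Group G] {A : Type} {σ : A → G}
    {kind : A → VKind} (h : IsVPL kind {w : List A | (w.map σ).prod = 1}) {a b : A}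
    (hb : σ b = (σ a)⁻¹) (hab : kind a ≠ .call ∨ kind b = .call) : IsOfFinOrder (σ a) := by
  obtain ⟨M, hM⟩ := h
  have hmem : ∀ n k, M.Accepts (List.replicate n a ++ List.replicate k b) ↔ σ a ^ n = σ a ^ k := by
    intro n k
    change _ ∈ {w | M.Accepts w} ↔ _
    rw [← hM]
    simp [List.prod_replicate, hb, inv_pow, mul_inv_eq_one]
  obtain ⟨n, m, hnm, hA⟩ := M.exists_ne_accepts_replicate_append hab fun n => (hmem n n).2 rfl
  by_contra hinf
  exact hnm (injective_pow_iff_not_isOfFinOrder.2 hinf ((hmem m n).1 hA)).symm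

theorem generators_torsion_of_vpl_wordProblem_general {G : Type} [Group G]
    {A : Type} (σ : A → G)
    (hinv : ∀ s : A, ∃ t : A, σ t = (σ s)⁻¹)
    (kind : A → VKind)
    (h : IsVPL kind {w : List A | (w.map σ).prod = 1}) :
    ∀ s : A, IsOfFinOrder (σ s) := by
  intro s
  obtain ⟨t, ht⟩ := hinv s
  by_cases hst : kind s ≠ .call ∨ kind t = .call
  · exact isOfFinOrder_of_isVPL_wordProblem h ht hst
  · push Not at hst
    rw [← isOfFinOrder_inv_iff, ← ht]
    exact isOfFinOrder_of_isVPL_wordProblem h (inv_eq_iff_eq_inv.1 ht.symm) (.inl hst.2)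

/-- If the word problem of a finitely generated group is a visibly pushdown
language over some partition of the (inverse-closed) generating alphabet, then
every generator has finite order. -/
theorem generators_torsion_of_vpl_wordProblem {G : Type} [Group G]
    {A : Type} [Fintype A] (σ : A → G)
    (hinv : ∀ s : A, ∃ t : A, σ t = (σ s)⁻¹)
    (hgen : Subgroup.closure (Set.range σ) = ⊤)
    (kind : A → VKind)
    (h : IsVPL kind {w : List A | (w.map σ).prod = 1}) :
    ∀ s : A, IsOfFinOrder (σ s) :=
  generators_torsion_of_vpl_wordProblem_general σ hinv kind h
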